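/- arXiv:2307.01073 — 2 statements merged into one kernel-verified Lean document; each statement's English description precedes it below -/
import Mathlib

section
/- For the 1-D Gaussian mixture (label -1 with probability p, x ~ N(γ₁,σ₁²); label +1 with probability 1-p, x ~ N(γ₂,σ₂²)), the population hinge loss of the linear classifier h_{w,b} with w ∈ {-1,1} is differentiable in b, and its derivative with respect to b equals p·Φ((b + w·γ₁ + 1)/σ₁) − (1−p)·Φ((−b − w·γ₂ + 1)/σ₂). -/
open MeasureTheory ProbabilityTheory

/-- CDF of the standard normal distribution `N(0,1)`. -/
noncomputable def Phi (x : ℝ) : ℝ := ((gaussianReal 0 1) (Set.Iic x)).toReal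

/-- The 1-D Gaussian mixture: with probability `p`, label `-1` and `x ~ N(γ₁, σ₁²)`;
with probability `1 - p`, label `+1` and `x ~ N(γ₂, σ₂²)`. -/
noncomputable def gaussMix (p γ₁ σ₁ γ₂ σ₂ : ℝ) : Measure (ℝ × ℝ) :=
  ENNReal.ofReal p • ((gaussianReal γ₁ (Real.toNNReal (σ₁ ^ 2))).map (fun x => (x, -1))) +
  ENNReal.ofReal (1 - p) • ((gaussianReal γ₂ (Real.toNNReal (σ₂ ^ 2))).map (fun x => (x, 1)))

/-- Population hinge loss (λ = 0) of the linear classifier `h_{w,b}` under `μ`. -/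
noncomputable def hingeLoss (w b : ℝ) (μ : Measure (ℝ × ℝ)) : ℝ :=
  ∫ z, max 0 (1 - z.2 * (w * z.1 + b)) ∂μ

/-! Each class contributes `∫ max 0 (1 - y (w x + b)) dN(γ, σ²)`. The integrand is `1`-Lipschitz
in `b` and differentiable off the null set where the hinge is at its kink, so one may differentiate
under the integral sign: the derivative is `-y` times the probability that the hinge is active.
Since `(y w)² = 1`, the map `x ↦ y w x` sends `N(γ, σ²)` to `N(y w γ, σ²)`, which turns that
probability into a value of `Φ`. -/

open Set Filter
open scoped NNReal

lemma hasDerivAt_max_zero {u : ℝ} (hu : u ≠ 0) :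
    HasDerivAt (fun t : ℝ => max 0 t) (if 0 < u then 1 else 0) u := by
  rcases hu.lt_or_gt with hneg | hpos
  · rw [if_neg hneg.not_gt]
    refine (hasDerivAt_const u 0).congr_of_eventuallyEq ?_
    filter_upwards [Iio_mem_nhds hneg] with t ht
    exact max_eq_left (le_of_lt ht)
  · rw [if_pos hpos]
    refine (hasDerivAt_id u).congr_of_eventuallyEq ?_
    filter_upwards [Ioi_mem_nhds hpos] with t ht
    exact max_eq_right (le_of_lt ht)

section IntegralMaxZero

variable {α : Type*} [MeasurableSpace α] {ν : Measure α} [IsFiniteMeasure ν] {f : α → ℝ}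

lemma integrable_max_zero_add (hf : Integrable f ν) (t : ℝ) :
    Integrable (fun x => max 0 (f x + t)) ν :=
  (hf.add (integrable_const t)).pos_part.congr (ae_of_all _ fun _ => max_comm _ _)

theorem hasDerivAt_integral_max_zero_add (hf : Integrable f ν) {b : ℝ}
    (hb : ν {x | f x + b = 0} = 0) :
    HasDerivAt (fun t => ∫ x, max 0 (f x + t) ∂ν) (ν.real {x | 0 < f x + b}) b := by
  have hS : NullMeasurableSet {x | 0 < f x + b} ν :=
    nullMeasurableSet_lt aemeasurable_const (hf.aemeasurable.add_const b)
  have hdiff : ∀ᵐ x ∂ν, HasDerivAt (fun t => max 0 (f x + t))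
      ({x | 0 < f x + b}.indicator 1 x) b := by
    filter_upwards [measure_eq_zero_iff_ae_notMem.mp hb] with x hx
    refine ((hasDerivAt_max_zero hx).comp b ((hasDerivAt_id b).const_add (f x))).congr_deriv ?_
    simp [indicator_apply]
  have hlip : ∀ x, LipschitzOnWith (Real.nnabs 1) (fun t => max 0 (f x + t)) univ := fun x => by
    simpa only [map_one] using ((isometry_add_left (f x)).lipschitz.const_max 0).lipschitzOnWith
  have key := hasDerivAt_integral_of_dominated_loc_of_lip (bound := fun _ => (1 : ℝ))
    univ_mem (Eventually.of_forall fun t => (integrable_max_zero_add hf t).aestronglyMeasurable)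
    (integrable_max_zero_add hf b) (aestronglyMeasurable_one.indicator₀ hS)
    (ae_of_all _ hlip) (integrable_const 1) hdiff
  simpa [integral_indicator₀ hS] using key.2

end IntegralMaxZero

lemma gaussianReal_map_const_mul_of_sq_eq_one {μ c : ℝ} (v : ℝ≥0) (hc : c ^ 2 = 1) :
    (gaussianReal μ v).map (c * ·) = gaussianReal (c * μ) v := by
  rw [gaussianReal_map_const_mul]
  congr
  ext
  simp [hc]

lemma gaussianReal_map_standardize (m : ℝ) {σ : ℝ} (hσ : 0 < σ) :
    (gaussianReal m (σ ^ 2).toNNReal).map (fun x => (x - m) / σ) = gaussianReal 0 1 := by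
  have : (fun x => (x - m) / σ) = (· / σ) ∘ (· - m) := rfl
  rw [this, ← Measure.map_map (by fun_prop) (by fun_prop), gaussianReal_map_sub_const,
    gaussianReal_map_div_const, sub_self, zero_div]
  congr
  ext
  simp [Real.coe_toNNReal _ (sq_nonneg σ), hσ.ne']

lemma integrable_one_sub_mul_gaussianReal (c m : ℝ) (v : ℝ≥0) :
    Integrable (fun x => 1 - c * x) (gaussianReal m v) :=
  (integrable_const 1).sub (((memLp_id_gaussianReal 1).integrable le_rfl).const_mul c)

lemma gaussianReal_real_Iio (m : ℝ) {σ : ℝ} (hσ : 0 < σ) (t : ℝ) :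
    (gaussianReal m (σ ^ 2).toNNReal).real (Iio t) = Phi ((t - m) / σ) := by
  have hpre : Iio t = (fun x => (x - m) / σ) ⁻¹' Iio ((t - m) / σ) := by
    ext x
    simp [div_lt_div_iff_of_pos_right hσ]
  have := nullSingletonClass_gaussianReal (μ := (0 : ℝ)) one_ne_zero
  rw [hpre, ← map_measureReal_apply (by fun_prop) measurableSet_Iio,
    gaussianReal_map_standardize m hσ, measureReal_congr Iio_ae_eq_Iic, Phi, measureReal_def]

theorem hasDerivAt_integral_hinge_gaussianReal (γ : ℝ) {σ : ℝ} (hσ : 0 < σ) {y w : ℝ}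
    (hyw : (y * w) ^ 2 = 1) (b : ℝ) :
    HasDerivAt (fun b' => ∫ x, max 0 (1 - y * (w * x + b')) ∂gaussianReal γ (σ ^ 2).toNNReal)
      (-y * Phi ((1 - y * b - y * w * γ) / σ)) b := by
  set ν := gaussianReal γ (σ ^ 2).toNNReal
  have := nullSingletonClass_gaussianReal (μ := y * w * γ) (v := (σ ^ 2).toNNReal)
    (by simp [hσ.ne'])
  have hmap := gaussianReal_map_const_mul_of_sq_eq_one (μ := γ) (σ ^ 2).toNNReal hyw
  have hnull : ν {x | 1 - y * w * x + -y * b = 0} = 0 := by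
    have : {x | 1 - y * w * x + -y * b = 0} = (y * w * ·) ⁻¹' {1 - y * b} := by
      ext x
      simp only [mem_ofPred_eq, mem_preimage, mem_singleton_iff]
      constructor <;> intro <;> linarith
    rw [this, ← Measure.map_apply (by fun_prop) (measurableSet_singleton _), hmap,
      measure_singleton]
  have hpos : {x | 0 < 1 - y * w * x + -y * b} = (y * w * ·) ⁻¹' Iio (1 - y * b) := by
    ext x
    simp only [mem_ofPred_eq, mem_preimage, mem_Iio]
    constructor <;> intro <;> linarith
  have hfun : (fun b' => ∫ x, max 0 (1 - y * (w * x + b')) ∂ν) =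
      (fun t => ∫ x, max 0 (1 - y * w * x + t) ∂ν) ∘ (-y * ·) := by
    funext b'
    simp only [Function.comp_apply]
    congr 1 with x
    ring_nf
  rw [hfun]
  refine ((hasDerivAt_integral_max_zero_add (integrable_one_sub_mul_gaussianReal _ _ _) hnull).comp
    b ((hasDerivAt_id b).const_mul (-y))).congr_deriv ?_
  rw [hpos, ← map_measureReal_apply (by fun_prop) measurableSet_Iio, hmap,
    gaussianReal_real_Iio _ hσ]
  ring

lemma hingeLoss_map_prodMk (w b y : ℝ) (ν : Measure ℝ) :
    hingeLoss w b (ν.map (fun x => (x, y))) = ∫ x, max 0 (1 - y * (w * x + b)) ∂ν := by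
  rw [hingeLoss, integral_map (by fun_prop) (by fun_prop)]

lemma integrable_hinge_map_prodMk_gaussianReal (w b y m : ℝ) (v : ℝ≥0) :
    Integrable (fun z : ℝ × ℝ => max 0 (1 - z.2 * (w * z.1 + b)))
      ((gaussianReal m v).map (fun x => (x, y))) := by
  refine (integrable_map_measure (by fun_prop) (by fun_prop)).mpr ?_
  refine (integrable_max_zero_add (integrable_one_sub_mul_gaussianReal (y * w) m v) (-y * b)).congr
    (ae_of_all _ fun x => ?_)
  simp only [Function.comp_apply]
  ring_nf

lemma hingeLoss_gaussMix (p γ₁ σ₁ γ₂ σ₂ w b : ℝ) (hp0 : 0 ≤ p) (hp1 : p ≤ 1) :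
    hingeLoss w b (gaussMix p γ₁ σ₁ γ₂ σ₂) =
      p * ∫ x, max 0 (1 - (-1) * (w * x + b)) ∂gaussianReal γ₁ (σ₁ ^ 2).toNNReal +
      (1 - p) * ∫ x, max 0 (1 - 1 * (w * x + b)) ∂gaussianReal γ₂ (σ₂ ^ 2).toNNReal := by
  rw [gaussMix, hingeLoss, integral_add_measure
      ((integrable_hinge_map_prodMk_gaussianReal _ _ _ _ _).smul_measure ENNReal.ofReal_ne_top)
      ((integrable_hinge_map_prodMk_gaussianReal _ _ _ _ _).smul_measure ENNReal.ofReal_ne_top),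
    integral_smul_measure, integral_smul_measure, ENNReal.toReal_ofReal hp0,
    ENNReal.toReal_ofReal (sub_nonneg.mpr hp1), ← hingeLoss, ← hingeLoss, hingeLoss_map_prodMk,
    hingeLoss_map_prodMk, smul_eq_mul, smul_eq_mul]

theorem stmt1 (p γ₁ σ₁ γ₂ σ₂ w : ℝ) (hp0 : 0 ≤ p) (hp1 : p ≤ 1)
    (hσ₁ : 0 < σ₁) (hσ₂ : 0 < σ₂) (hw : w = -1 ∨ w = 1) (b : ℝ) :
    HasDerivAt (fun b' => hingeLoss w b' (gaussMix p γ₁ σ₁ γ₂ σ₂))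
      (p * Phi ((b + w * γ₁ + 1) / σ₁) - (1 - p) * Phi ((-b - w * γ₂ + 1) / σ₂)) b := by
  have hw2 : w ^ 2 = 1 := by rcases hw with rfl | rfl <;> norm_num
  have h₁ := hasDerivAt_integral_hinge_gaussianReal γ₁ hσ₁ (y := -1) (by simpa using hw2) b
  have h₂ := hasDerivAt_integral_hinge_gaussianReal γ₂ hσ₂ (y := 1) (by simpa using hw2) b
  rw [funext fun b' => hingeLoss_gaussMix p γ₁ σ₁ γ₂ σ₂ w b' hp0 hp1]
  refine ((h₁.const_mul p).add (h₂.const_mul (1 - p))).congr_deriv ?_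
  ring_nf
end

section
/- Suppose the clean distribution μ_c has support contained in the constraint set C. Then for any poisoning ratio δ* ∈ [0, ε] and any poisoned distribution μ_p* with supp(μ_p*) ⊆ C, the mixture μ_p^{(ε)} = ((ε−δ*)/(ε(1+δ*)))·μ_c + (δ*(1+ε)/(ε(1+δ*)))·μ_p* is a probability distribution with supp(μ_p^{(ε)}) ⊆ C, and for every hypothesis h, L(h; μ_c) + ε·L(h; μ_p^{(ε)}) = ((1+ε)/(1+δ*))·(L(h; μ_c) + δ*·L(h; μ_p*)). Consequently, argmin_h {L(h; μ_c) + ε·L(h; μ_p^{(ε)})} = argmin_h {L(h; μ_c) + δ*·L(h; μ_p*)}: the optimal poisoning performance achievable with budget δ* is achievable with the full budget ε. -/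
open MeasureTheory

theorem stmt9 {H Z : Type*} [MeasurableSpace Z]
    (ℓ : H → Z → ℝ) (hnn : ∀ h z, 0 ≤ ℓ h z)
    (μc μp : Measure Z) (hμc : IsProbabilityMeasure μc) (hμp : IsProbabilityMeasure μp)
    (C : Set Z) (hcC : μc Cᶜ = 0) (hpC : μp Cᶜ = 0)
    (ε δ : ℝ) (hε : 0 < ε) (hδ0 : 0 ≤ δ) (hδε : δ ≤ ε)
    (hint : ∀ h, Integrable (ℓ h) μc ∧ Integrable (ℓ h) μp) :
    let ν : Measure Z := ENNReal.ofReal ((ε - δ) / (ε * (1 + δ))) • μc +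
      ENNReal.ofReal (δ * (1 + ε) / (ε * (1 + δ))) • μp
    IsProbabilityMeasure ν ∧
    ν Cᶜ = 0 ∧
    (∀ h, (∫ z, ℓ h z ∂μc) + ε * ∫ z, ℓ h z ∂ν
        = ((1 + ε) / (1 + δ)) * ((∫ z, ℓ h z ∂μc) + δ * ∫ z, ℓ h z ∂μp)) ∧
    (∀ h, (∀ h', (∫ z, ℓ h z ∂μc) + ε * ∫ z, ℓ h z ∂ν
            ≤ (∫ z, ℓ h' z ∂μc) + ε * ∫ z, ℓ h' z ∂ν) ↔
          (∀ h', (∫ z, ℓ h z ∂μc) + δ * ∫ z, ℓ h z ∂μp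
            ≤ (∫ z, ℓ h' z ∂μc) + δ * ∫ z, ℓ h' z ∂μp)) := by
  intro ν
  have hδ1 : (0:ℝ) < 1 + δ := by linarith
  have hd : (0:ℝ) < ε * (1 + δ) := mul_pos hε hδ1
  have ha0 : 0 ≤ (ε - δ) / (ε * (1 + δ)) := div_nonneg (by linarith) hd.le
  have hb0 : 0 ≤ δ * (1 + ε) / (ε * (1 + δ)) :=
    div_nonneg (mul_nonneg hδ0 (by linarith)) hd.le
  have hab : (ε - δ) / (ε * (1 + δ)) + δ * (1 + ε) / (ε * (1 + δ)) = 1 := by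
    field_simp
    ring
  have key : ∀ h, ∫ z, ℓ h z ∂ν =
      ((ε - δ) / (ε * (1 + δ))) * ∫ z, ℓ h z ∂μc +
      (δ * (1 + ε) / (ε * (1 + δ))) * ∫ z, ℓ h z ∂μp := by
    intro h
    have h1 : Integrable (ℓ h) (ENNReal.ofReal ((ε - δ) / (ε * (1 + δ))) • μc) :=
      (hint h).1.smul_measure ENNReal.ofReal_ne_top
    have h2 : Integrable (ℓ h) (ENNReal.ofReal (δ * (1 + ε) / (ε * (1 + δ))) • μp) :=
      (hint h).2.smul_measure ENNReal.ofReal_ne_top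
    show ∫ z, ℓ h z ∂(_ + _) = _
    rw [integral_add_measure h1 h2, integral_smul_measure, integral_smul_measure,
      ENNReal.toReal_ofReal ha0, ENNReal.toReal_ofReal hb0, smul_eq_mul, smul_eq_mul]
  have heq : ∀ h, (∫ z, ℓ h z ∂μc) + ε * ∫ z, ℓ h z ∂ν
      = ((1 + ε) / (1 + δ)) * ((∫ z, ℓ h z ∂μc) + δ * ∫ z, ℓ h z ∂μp) := by
    intro h
    rw [key h]
    field_simp
    ring
  refine ⟨?_, ?_, heq, ?_⟩
  · constructor
    show (ENNReal.ofReal _ • μc + ENNReal.ofReal _ • μp) Set.univ = 1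
    rw [Measure.add_apply, Measure.smul_apply, Measure.smul_apply, measure_univ,
      measure_univ, smul_eq_mul, smul_eq_mul, mul_one, mul_one,
      ← ENNReal.ofReal_add ha0 hb0, hab, ENNReal.ofReal_one]
  · show (ENNReal.ofReal _ • μc + ENNReal.ofReal _ • μp) Cᶜ = 0
    rw [Measure.add_apply, Measure.smul_apply, Measure.smul_apply, hcC, hpC]
    simp
  · intro h
    have hc : (0:ℝ) < (1 + ε) / (1 + δ) := div_pos (by linarith) hδ1
    constructor
    · intro H h'
      have := H h'
      rw [heq h, heq h'] at this
      exact le_of_mul_le_mul_left this hc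
    · intro H h'
      rw [heq h, heq h']
      exact mul_le_mul_of_nonneg_left (H h') hc.le
end
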